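/- Let M be a positive integer, let x, s : Fin M → ℂ, and for j ∈ Fin M define F_x(j) = Σ_{n=0}^{M−1} x(n)·exp(−2πi·j·n/M) and F_s(j) = Σ_{n=0}^{M−1} s(n)·exp(−2πi·j·n/M). Let φ : Fin M → [−π, π] be a map of the frequency indices into [−π, π] such that every point of [−π, π] lies within distance Δ ≥ 0 of some φ(j). Let f, g : ℝ → ℝ be Lipschitz on [−π, π] with constants ℓ_f and ℓ_g, satisfying f(φ(j)) = (1/M)·|F_x(j)|² and g(φ(j)) = (1/M)·|F_s(j)|² for all j ∈ Fin M. Suppose there exist δ ≥ 0 and K ≥ 0 such that for every j ∈ Fin M, ||F_x(j)| − |F_s(j)|| ≤ δ, |F_x(j)| ≤ K and |F_s(j)| ≤ K. Then for every integer k, |(1/(2π))·∫_{−π}^{π} (g(ω) − f(ω))·exp(i·ω·k) dω| ≤ (2K/M)·δ + (ℓ_f + ℓ_g)·Δ. -/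

import Mathlib

noncomputable def dft (M : ℕ) (x : Fin M → ℂ) (j : Fin M) : ℂ :=
  ∑ n : Fin M, x n * Complex.exp (-2 * Real.pi * Complex.I * (j : ℕ) * (n : ℕ) / (M : ℕ))

/-!
The interpolating densities are compared through the frequency grid. At a grid point `φ j`
they equal the two periodograms, whose difference `(|F_s j|² - |F_x j|²)/M` factors as
`(|F_s j| + |F_x j|)(|F_s j| - |F_x j|)/M` and is therefore at most `2Kδ/M`. Any `ω ∈ [-π, π]`
lies within `Δ` of a grid point, so the Lipschitz bounds move this estimate to `ω` at the cost
`(ℓf + ℓg)Δ`. Finally `|e^{iωk}| = 1`, so averaging over `[-π, π]` does not increase the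
uniform bound on `g - f`.
-/

open Real

noncomputable section

def periodogram (M : ℕ) (x : Fin M → ℂ) (j : Fin M) : ℝ :=
  (1 / (M : ℝ)) * ‖dft M x j‖ ^ 2

/-- The paper's `r_h(k)`: by Wiener–Khinchin, the autocorrelation at lag `k` of a stationary
process with spectral density `h`. -/
def autocorrelation (h : ℝ → ℝ) (k : ℤ) : ℂ :=
  (1 / (2 * (π : ℂ))) * ∫ ω in (-π)..π, (h ω : ℂ) * Complex.exp (Complex.I * ω * k)

end

theorem abs_sq_sub_sq_le {a b δ K : ℝ} (h : |a - b| ≤ δ) (ha : |a| ≤ K) (hb : |b| ≤ K) :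
    |a ^ 2 - b ^ 2| ≤ 2 * K * δ := by
  rw [sq_sub_sq, abs_mul]
  have hsum : |a + b| ≤ 2 * K := by linarith [abs_add_le a b]
  exact mul_le_mul hsum h (abs_nonneg _) (by linarith [abs_nonneg a])

theorem abs_periodogram_sub_le {M : ℕ} {x s : Fin M → ℂ} {j : Fin M} {δ K : ℝ}
    (hclose : |‖dft M x j‖ - ‖dft M s j‖| ≤ δ)
    (hx : ‖dft M x j‖ ≤ K) (hs : ‖dft M s j‖ ≤ K) :
    |periodogram M s j - periodogram M x j| ≤ 2 * K / M * δ := by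
  have hsq : |‖dft M s j‖ ^ 2 - ‖dft M x j‖ ^ 2| ≤ 2 * K * δ :=
    abs_sq_sub_sq_le (by rwa [abs_sub_comm]) (by rwa [abs_norm]) (by rwa [abs_norm])
  calc |periodogram M s j - periodogram M x j|
      = 1 / M * |‖dft M s j‖ ^ 2 - ‖dft M x j‖ ^ 2| := by
        rw [periodogram, periodogram, ← mul_sub, abs_mul, abs_of_nonneg (by positivity)]
    _ ≤ 1 / M * (2 * K * δ) := by gcongr
    _ = 2 * K / M * δ := by ring

section Lipschitz

variable {s : Set ℝ} {f : ℝ → ℝ} {ℓ : ℝ}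

theorem nonneg_of_abs_sub_le_mul_abs_sub (hf : ∀ a ∈ s, ∀ b ∈ s, |f a - f b| ≤ ℓ * |a - b|)
    {a b : ℝ} (ha : a ∈ s) (hb : b ∈ s) (hab : a ≠ b) : 0 ≤ ℓ :=
  nonneg_of_mul_nonneg_left ((abs_nonneg _).trans (hf a ha b hb)) (abs_pos.2 (sub_ne_zero.2 hab))

theorem abs_sub_le_mul_of_abs_sub_le (hf : ∀ a ∈ s, ∀ b ∈ s, |f a - f b| ≤ ℓ * |a - b|)
    (hℓ : 0 ≤ ℓ) {a b Δ : ℝ} (ha : a ∈ s) (hb : b ∈ s) (hab : |a - b| ≤ Δ) :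
    |f a - f b| ≤ ℓ * Δ :=
  (hf a ha b hb).trans (mul_le_mul_of_nonneg_left hab hℓ)

end Lipschitz

theorem norm_autocorrelation_le {h : ℝ → ℝ} {B : ℝ} (hB : ∀ ω ∈ Set.Icc (-π) π, |h ω| ≤ B)
    (k : ℤ) : ‖autocorrelation h k‖ ≤ B := by
  have hbound : ∀ ω ∈ Set.uIoc (-π) π,
      ‖(h ω : ℂ) * Complex.exp (Complex.I * ω * k)‖ ≤ B := by
    intro ω hω
    rw [Set.uIoc_of_le (by linarith [pi_pos])] at hω
    have hexp : Complex.I * ω * k = ((ω * k : ℝ) : ℂ) * Complex.I := by push_cast; ring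
    rw [norm_mul, Complex.norm_real, hexp, Complex.norm_exp_ofReal_mul_I, mul_one]
    exact hB ω (Set.Ioc_subset_Icc_self hω)
  have hint := intervalIntegral.norm_integral_le_of_norm_le_const hbound
  rw [show π - -π = 2 * π by ring, abs_of_pos (by positivity)] at hint
  have hscale : ‖1 / (2 * (π : ℂ))‖ = 1 / (2 * π) := by
    rw [norm_div, norm_mul, norm_one, Complex.norm_two, Complex.norm_real, norm_of_nonneg pi_pos.le]
  calc ‖autocorrelation h k‖
      ≤ 1 / (2 * π) * (B * (2 * π)) := by
        rw [autocorrelation, norm_mul, hscale]; gcongr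
    _ = B := by field_simp

theorem acf_close_of_dft_close_general (M : ℕ) (x s : Fin M → ℂ)
    (φ : Fin M → ℝ) (hφ : ∀ j : Fin M, φ j ∈ Set.Icc (-Real.pi) Real.pi)
    (Δ : ℝ) (hcover : ∀ ω ∈ Set.Icc (-Real.pi) Real.pi, ∃ j : Fin M, |ω - φ j| ≤ Δ)
    (f g : ℝ → ℝ) (ℓf ℓg : ℝ)
    (hf : ∀ a ∈ Set.Icc (-Real.pi) Real.pi, ∀ b ∈ Set.Icc (-Real.pi) Real.pi,
      |f a - f b| ≤ ℓf * |a - b|)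
    (hg : ∀ a ∈ Set.Icc (-Real.pi) Real.pi, ∀ b ∈ Set.Icc (-Real.pi) Real.pi,
      |g a - g b| ≤ ℓg * |a - b|)
    (hfφ : ∀ j : Fin M, f (φ j) = (1 / (M : ℝ)) * (‖dft M x j‖) ^ 2)
    (hgφ : ∀ j : Fin M, g (φ j) = (1 / (M : ℝ)) * (‖dft M s j‖) ^ 2)
    (δ K : ℝ) (hclose : ∀ j : Fin M, |‖dft M x j‖ - ‖dft M s j‖| ≤ δ)
    (hbx : ∀ j : Fin M, ‖dft M x j‖ ≤ K)
    (hbs : ∀ j : Fin M, ‖dft M s j‖ ≤ K) :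
    ∀ k : ℤ,
      ‖(1 / (2 * (Real.pi : ℂ))) *
          ∫ ω in (-Real.pi)..Real.pi,
            ((g ω - f ω : ℝ) : ℂ) * Complex.exp (Complex.I * (ω : ℂ) * (k : ℂ))‖
        ≤ (2 * K / (M : ℝ)) * δ + (ℓf + ℓg) * Δ := by
  intro k
  have hπ : -π ∈ Set.Icc (-π) π := ⟨le_rfl, by linarith [pi_pos]⟩
  have hπ' : π ∈ Set.Icc (-π) π := ⟨by linarith [pi_pos], le_rfl⟩
  have hne : -π ≠ π := by linarith [pi_pos]
  have hℓf := nonneg_of_abs_sub_le_mul_abs_sub hf hπ hπ' hne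
  have hℓg := nonneg_of_abs_sub_le_mul_abs_sub hg hπ hπ' hne
  refine norm_autocorrelation_le (h := fun ω => g ω - f ω) (fun ω hω => ?_) k
  obtain ⟨j, hj⟩ := hcover ω hω
  have hgrid : |g (φ j) - f (φ j)| ≤ 2 * K / M * δ := by
    rw [hfφ, hgφ]
    exact abs_periodogram_sub_le (hclose j) (hbx j) (hbs j)
  have hfω := abs_sub_le_mul_of_abs_sub_le hf hℓf hω (hφ j) hj
  have hgω := abs_sub_le_mul_of_abs_sub_le hg hℓg hω (hφ j) hj
  calc |g ω - f ω|
      ≤ |g ω - g (φ j)| + |g (φ j) - f (φ j)| + |f (φ j) - f ω| := by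
        linarith [abs_sub_le (g ω) (g (φ j)) (f ω), abs_sub_le (g (φ j)) (f (φ j)) (f ω)]
    _ ≤ 2 * K / M * δ + (ℓf + ℓg) * Δ := by rw [abs_sub_comm (f _)]; linarith

/-- Full deterministic chain of the proof of Theorem 1 (Steps 1–4): if the DFT
magnitudes of the sequences `x` and `s` are uniformly `δ`-close and bounded by `K`,
the frequency indices are mapped by `φ` into a `Δ`-net of `[-π, π]`, and `f`, `g`
are Lipschitz power spectral densities on `[-π, π]` interpolating the periodograms
of `x` and `s` at the points `φ(j)`, then the autocorrelations of `f` and `g`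
differ by at most `(2K/M)·δ + (ℓf + ℓg)·Δ` at every integer lag `k`. -/
theorem acf_close_of_dft_close (M : ℕ) (hM : 0 < M) (x s : Fin M → ℂ)
    (φ : Fin M → ℝ) (hφ : ∀ j : Fin M, φ j ∈ Set.Icc (-Real.pi) Real.pi)
    (Δ : ℝ) (hΔ : 0 ≤ Δ)
    (hcover : ∀ ω ∈ Set.Icc (-Real.pi) Real.pi, ∃ j : Fin M, |ω - φ j| ≤ Δ)
    (f g : ℝ → ℝ) (ℓf ℓg : ℝ)
    (hf : ∀ a ∈ Set.Icc (-Real.pi) Real.pi, ∀ b ∈ Set.Icc (-Real.pi) Real.pi,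
      |f a - f b| ≤ ℓf * |a - b|)
    (hg : ∀ a ∈ Set.Icc (-Real.pi) Real.pi, ∀ b ∈ Set.Icc (-Real.pi) Real.pi,
      |g a - g b| ≤ ℓg * |a - b|)
    (hfφ : ∀ j : Fin M, f (φ j) = (1 / (M : ℝ)) * (‖dft M x j‖) ^ 2)
    (hgφ : ∀ j : Fin M, g (φ j) = (1 / (M : ℝ)) * (‖dft M s j‖) ^ 2)
    (δ K : ℝ) (hδ : 0 ≤ δ) (hK : 0 ≤ K)
    (hclose : ∀ j : Fin M, |‖dft M x j‖ - ‖dft M s j‖| ≤ δ)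
    (hbx : ∀ j : Fin M, ‖dft M x j‖ ≤ K)
    (hbs : ∀ j : Fin M, ‖dft M s j‖ ≤ K) :
    ∀ k : ℤ,
      ‖(1 / (2 * (Real.pi : ℂ))) *
          ∫ ω in (-Real.pi)..Real.pi,
            ((g ω - f ω : ℝ) : ℂ) * Complex.exp (Complex.I * (ω : ℂ) * (k : ℂ))‖
        ≤ (2 * K / (M : ℝ)) * δ + (ℓf + ℓg) * Δ :=
  acf_close_of_dft_close_general M x s φ hφ Δ hcover f g ℓf ℓg hf hg hfφ hgφ δ K hclose hbx hbs
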